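/- Let a ∈ K∖F. Then the nucleus of the nonassociative cyclic algebra A = (K/F,σ,a), namely the set of all z ∈ A such that (z∘u)∘v = z∘(u∘v), (u∘z)∘v = u∘(z∘v) and (u∘v)∘z = u∘(v∘z) for all u, v ∈ A, is exactly the copy of K in A, i.e. the set of elements of the form x t^0 with x ∈ K. -/

import Mathlib

open Finset

/-- The unit element `t^0` of the nonassociative cyclic algebra, in coordinates. -/
def cycOne (K : Type*) [Zero K] [One K] (m : ℕ) : Fin m → K :=
  fun k => if (k : ℕ) = 0 then 1 else 0

/-- The embedding `x ↦ x t^0` of `K` into the nonassociative cyclic algebra. -/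
def cycEmb (K : Type*) [Zero K] (m : ℕ) (x : K) : Fin m → K :=
  fun i => if (i : ℕ) = 0 then x else 0

section

variable {F K : Type*} [Field F] [Field K] [Algebra F K]

/-- Coordinates of the product in the nonassociative cyclic algebra `(K/F, σ, a)`:
`(x t^i) ∘ (y t^j) = x σ^i(y) t^{i+j}` if `i+j < m` and
`(x t^i) ∘ (y t^j) = x σ^i(y) σ^{i+j-m}(a) t^{i+j-m}` if `i+j ≥ m`. -/
def cycMul (m : ℕ) (σ : K ≃ₐ[F] K) (a : K) (u v : Fin m → K) : Fin m → K :=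
  fun k =>
    (∑ i : Fin m, ∑ j : Fin m,
        if (i : ℕ) + (j : ℕ) = (k : ℕ) then u i * (σ ^ (i : ℕ)) (v j) else 0) +
      ∑ i : Fin m, ∑ j : Fin m,
        if (i : ℕ) + (j : ℕ) = (k : ℕ) + m then
          u i * (σ ^ (i : ℕ)) (v j) * (σ ^ (k : ℕ)) a
        else 0

/-- The field norm `N_{K/F}(k) = ∏_{l=0}^{m-1} σ^l(k)`. -/
def cycNorm (m : ℕ) (σ : K ≃ₐ[F] K) (k : K) : K :=
  ∏ l ∈ Finset.range m, (σ ^ l) k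

/-- The map `H_{τ,k} : x t^i ↦ τ(x) (∏_{l=0}^{i-1} σ^l(k)) t^i`. -/
def cycH (m : ℕ) (σ τ : K ≃ₐ[F] K) (k : K) (u : Fin m → K) : Fin m → K :=
  fun i => τ (u i) * ∏ l ∈ Finset.range (i : ℕ), (σ ^ l) k

/-- The map `G_c : x t^i ↦ x c⁻¹ σ^i(c) t^i`. -/
def cycG (m : ℕ) (σ : K ≃ₐ[F] K) (c : K) (u : Fin m → K) : Fin m → K :=
  fun i => u i * c⁻¹ * (σ ^ (i : ℕ)) c

/-- `H` is an `F`-automorphism of the nonassociative cyclic algebra `(K/F, σ, a)`. -/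
def IsCycAut (m : ℕ) (σ : K ≃ₐ[F] K) (a : K) (H : (Fin m → K) → (Fin m → K)) : Prop :=
  Function.Bijective H ∧
    (∀ u v, H (u + v) = H u + H v) ∧
    (∀ (c : F) (u : Fin m → K), H (c • u) = c • H u) ∧
    H (cycOne K m) = cycOne K m ∧
    ∀ u v, H (cycMul m σ a u v) = cycMul m σ a (H u) (H v)

/-- `H` is an inner `F`-automorphism of `(K/F, σ, a)`:
`H(z) = (w_l ∘ z) ∘ w` for some `w ≠ 0` with left inverse `w_l`. -/
def IsCycInner (m : ℕ) (σ : K ≃ₐ[F] K) (a : K) (H : (Fin m → K) → (Fin m → K)) : Prop :=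
  ∃ w wl : Fin m → K, w ≠ 0 ∧ cycMul m σ a wl w = cycOne K m ∧
    ∀ z, H z = cycMul m σ a (cycMul m σ a wl z) w

end

/-! Right multiplication by `x t^0` multiplies the `t^i`-coordinate by `σ^i(x)`, and left
multiplication by it is scaling by `x`; both commute with the product, the former because the
twist `σ^{i+j-m}(a)` of the wrapped-around terms is compatible with `σ^m = 1`. Conversely, for
`z` in the left nucleus compare `(z ∘ t^{m-1}) ∘ t` with `z ∘ (t^{m-1} ∘ t) = z ∘ a`: their
`t^k`-coordinates are `z_k σ^{k-1}(a)` and `z_k σ^k(a)`, which differ unless `z_k = 0`, since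
`a ∉ F` forces `σ(a) ≠ a`. -/

theorem AlgEquiv.pow_finrank_eq_one {F K : Type*} [Field F] [Field K] [Algebra F K]
    [IsGalois F K] [FiniteDimensional F K] (σ : K ≃ₐ[F] K) : σ ^ Module.finrank F K = 1 := by
  rw [← IsGalois.card_aut_eq_finrank]
  exact pow_card_eq_one'

theorem AlgEquiv.apply_ne_self_of_forall_mem_zpowers {F K : Type*} [Field F] [Field K]
    [Algebra F K] [IsGalois F K] [FiniteDimensional F K] {σ : K ≃ₐ[F] K}
    (hgen : ∀ τ : K ≃ₐ[F] K, τ ∈ Subgroup.zpowers σ) {a : K}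
    (ha : a ∉ Set.range (algebraMap F K)) : σ a ≠ a := by
  refine fun hσa => ha ((IsGalois.mem_range_algebraMap_iff_fixed a).2 fun τ => ?_)
  obtain ⟨j, rfl⟩ := Subgroup.mem_zpowers_iff.1 (hgen τ)
  exact MulAction.mem_fixedBy_zpow (G := K ≃ₐ[F] K) (α := K) hσa j

theorem Fin.sum_ite_val_add_eq {M : Type*} [AddCommMonoid M] {m : ℕ} {i : Fin m} {j n : ℕ}
    (h : (i : ℕ) + j = n) (f : Fin m → M) :
    (∑ i' : Fin m, if (i' : ℕ) + j = n then f i' else 0) = f i := by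
  rw [Finset.sum_eq_single i (fun b _ hb => if_neg fun hb' => hb (Fin.ext (by omega)))
    (by simp), if_pos h]

section CyclicAlgebra

variable {F K : Type*} [Field F] [Field K] [Algebra F K] {m : ℕ} (σ : K ≃ₐ[F] K) (a : K)

theorem cycMul_single_apply (u : Fin m → K) (j : Fin m) (y : K) (k : Fin m) :
    cycMul m σ a u (Pi.single j y) k =
      (∑ i : Fin m, if (i : ℕ) + j = k then u i * (σ ^ (i : ℕ)) y else 0) +
        ∑ i : Fin m, if (i : ℕ) + j = k + m then u i * (σ ^ (i : ℕ)) y * (σ ^ (k : ℕ)) a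
          else 0 := by
  simp only [cycMul]
  congr 1 <;> refine Finset.sum_congr rfl fun i _ => ?_ <;> rw [Finset.sum_eq_single j] <;>
    simp +contextual

theorem cycMul_single_apply_of_add_eq (u : Fin m → K) {i j k : Fin m} (y : K)
    (h : (i : ℕ) + j = k) :
    cycMul m σ a u (Pi.single j y) k = u i * (σ ^ (i : ℕ)) y := by
  rw [cycMul_single_apply, Fin.sum_ite_val_add_eq h,
    Finset.sum_eq_zero fun i' _ => if_neg (by omega), add_zero]

theorem cycMul_single_apply_of_add_eq_add (u : Fin m → K) {i j k : Fin m} (y : K)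
    (h : (i : ℕ) + j = k + m) :
    cycMul m σ a u (Pi.single j y) k = u i * (σ ^ (i : ℕ)) y * (σ ^ (k : ℕ)) a := by
  rw [cycMul_single_apply, Fin.sum_ite_val_add_eq h,
    Finset.sum_eq_zero fun i' _ => if_neg (by have := i'.isLt; have := i.isLt; omega), zero_add]

theorem cycEmb_eq_single [NeZero m] (x : K) : cycEmb K m x = Pi.single 0 x := by
  ext i
  simp only [cycEmb, Pi.single_apply, Fin.val_eq_zero_iff]

theorem cycMul_cycEmb [NeZero m] (u : Fin m → K) (x : K) :
    cycMul m σ a u (cycEmb K m x) = fun k => u k * (σ ^ (k : ℕ)) x := by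
  ext k
  rw [cycEmb_eq_single, cycMul_single_apply_of_add_eq σ a u x (i := k) (by simp)]

theorem cycEmb_mul [NeZero m] (x : K) (v : Fin m → K) :
    cycMul m σ a (cycEmb K m x) v = x • v := by
  ext k
  simp only [cycMul, cycEmb, Fin.val_eq_zero_iff, ite_mul, zero_mul]
  rw [Finset.sum_eq_single 0 (fun i _ hi => Finset.sum_eq_zero fun j _ => by simp [hi]) (by simp),
    Finset.sum_eq_single 0 (fun i _ hi => Finset.sum_eq_zero fun j _ => by simp [hi]) (by simp)]
  simp only [if_true, Fin.val_zero, zero_add, pow_zero, AlgEquiv.one_apply, Fin.val_inj,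
    Finset.sum_ite_eq', Finset.mem_univ]
  rw [Finset.sum_eq_zero fun j _ => if_neg (by omega), add_zero, Pi.smul_apply, smul_eq_mul]

theorem mem_range_cycEmb_iff {z : Fin m → K} :
    z ∈ Set.range (cycEmb K m) ↔ ∀ k : Fin m, (k : ℕ) ≠ 0 → z k = 0 := by
  refine ⟨fun ⟨x, hx⟩ k hk => by simp [← hx, cycEmb, hk], fun hz => ?_⟩
  cases m with
  | zero => exact ⟨0, funext fun k => k.elim0⟩
  | succ n =>
    refine ⟨z 0, funext fun k => ?_⟩
    by_cases hk : (k : ℕ) = 0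
    · obtain rfl : k = 0 := Fin.ext hk
      simp [cycEmb]
    · simp [cycEmb, hk, hz k hk]

theorem cycEmb_mul_assoc [NeZero m] (x : K) (u v : Fin m → K) :
    cycMul m σ a (cycMul m σ a (cycEmb K m x) u) v =
      cycMul m σ a (cycEmb K m x) (cycMul m σ a u v) := by
  rw [cycEmb_mul, cycEmb_mul]
  ext k
  simp only [cycMul, Pi.smul_apply, smul_eq_mul, mul_add, Finset.mul_sum, mul_ite, mul_zero,
    mul_assoc]

theorem mul_cycEmb_mul_assoc [NeZero m] (x : K) (u v : Fin m → K) :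
    cycMul m σ a (cycMul m σ a u (cycEmb K m x)) v =
      cycMul m σ a u (cycMul m σ a (cycEmb K m x) v) := by
  rw [cycMul_cycEmb, cycEmb_mul]
  ext k
  simp only [cycMul, Pi.smul_apply, smul_eq_mul, map_mul]
  congr 1 <;>
    exact Finset.sum_congr rfl fun i _ => Finset.sum_congr rfl fun j _ => by split_ifs <;> ring

theorem mul_mul_cycEmb_assoc [NeZero m] (hσm : σ ^ m = 1) (x : K) (u v : Fin m → K) :
    cycMul m σ a (cycMul m σ a u v) (cycEmb K m x) =
      cycMul m σ a u (cycMul m σ a v (cycEmb K m x)) := by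
  have hpow : ∀ i j : ℕ, (σ ^ i) ((σ ^ j) x) = (σ ^ (i + j)) x := fun i j => by
    rw [pow_add, AlgEquiv.mul_apply]
  have hwrap : ∀ k : ℕ, (σ ^ (k + m)) x = (σ ^ k) x := fun k => by rw [pow_add, hσm, mul_one]
  rw [cycMul_cycEmb, cycMul_cycEmb]
  ext k
  simp only [cycMul, add_mul, Finset.sum_mul, ite_mul, zero_mul, map_mul, hpow]
  congr 1 <;>
    refine Finset.sum_congr rfl fun i _ => Finset.sum_congr rfl fun j _ => ?_ <;>
    split_ifs with h <;> simp only [h, hwrap] <;> ring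

theorem apply_eq_zero_of_mul_assoc (hm : 2 ≤ m) (hσa : σ a ≠ a) {z : Fin m → K}
    (hz : ∀ u v : Fin m → K,
      cycMul m σ a (cycMul m σ a z u) v = cycMul m σ a z (cycMul m σ a u v))
    (k : Fin m) (hk : (k : ℕ) ≠ 0) : z k = 0 := by
  have : NeZero m := ⟨by omega⟩
  set t : Fin m → K := Pi.single ⟨1, by omega⟩ 1
  set tLast : Fin m → K := Pi.single ⟨m - 1, by omega⟩ 1 with htLast
  have htLast_t : cycMul m σ a tLast t = cycEmb K m a := by
    rw [cycEmb_eq_single]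
    ext l
    by_cases hl : l = 0
    · subst hl
      rw [cycMul_single_apply_of_add_eq_add σ a tLast 1 (i := ⟨m - 1, by omega⟩) (by simp; omega)]
      simp [htLast]
    · have hl' : (l : ℕ) ≠ 0 := by rwa [Ne, Fin.val_eq_zero_iff]
      rw [cycMul_single_apply_of_add_eq σ a tLast 1 (i := ⟨l - 1, by omega⟩) (by simp; omega)]
      rw [Pi.single_eq_of_ne hl, htLast,
        Pi.single_eq_of_ne (fun h => by simp [Fin.ext_iff] at h; omega), zero_mul]
  have key := congrFun (hz tLast t) k
  rw [htLast_t, cycMul_cycEmb,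
    cycMul_single_apply_of_add_eq σ a _ 1 (i := ⟨k - 1, by omega⟩) (by simp; omega),
    cycMul_single_apply_of_add_eq_add σ a _ 1 (i := k) (by simp; omega)] at key
  simp only [map_one, mul_one] at key
  have hpow : (σ ^ (k : ℕ)) a = (σ ^ ((k : ℕ) - 1)) (σ a) := by
    rw [← AlgEquiv.mul_apply, ← pow_succ, Nat.sub_add_cancel (by omega)]
  by_contra hzk
  rw [hpow] at key
  exact hσa ((σ ^ ((k : ℕ) - 1)).injective (mul_left_cancel₀ hzk key)).symm

end CyclicAlgebra

/-- For `a ∈ K∖F`, the nucleus of the nonassociative cyclic algebra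
`A = (K/F,σ,a)` is exactly the copy of `K` in `A`, i.e. `{x t^0 : x ∈ K}`. -/
theorem stmt12 {F K : Type*} [Field F] [Field K] [Algebra F K]
    (m : ℕ) (hm : 2 ≤ m) [IsGalois F K] [FiniteDimensional F K]
    (hrank : Module.finrank F K = m)
    (σ : K ≃ₐ[F] K) (hgen : ∀ τ : K ≃ₐ[F] K, τ ∈ Subgroup.zpowers σ)
    (a : K) (ha : a ∉ Set.range (algebraMap F K)) :
    {z : Fin m → K | ∀ u v : Fin m → K,
        cycMul m σ a (cycMul m σ a z u) v = cycMul m σ a z (cycMul m σ a u v) ∧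
        cycMul m σ a (cycMul m σ a u z) v = cycMul m σ a u (cycMul m σ a z v) ∧
        cycMul m σ a (cycMul m σ a u v) z = cycMul m σ a u (cycMul m σ a v z)} =
      Set.range (cycEmb K m) := by
  have : NeZero m := ⟨by omega⟩
  have hσm : σ ^ m = 1 := hrank ▸ σ.pow_finrank_eq_one
  have hσa : σ a ≠ a := AlgEquiv.apply_ne_self_of_forall_mem_zpowers hgen ha
  ext z
  refine ⟨fun hz => mem_range_cycEmb_iff.2
    (apply_eq_zero_of_mul_assoc σ a hm hσa fun u v => (hz u v).1), ?_⟩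
  rintro ⟨x, rfl⟩ u v
  exact ⟨cycEmb_mul_assoc σ a x u v, mul_cycEmb_mul_assoc σ a x u v,
    mul_mul_cycEmb_assoc σ a hσm x u v⟩
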